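/- arXiv:2502.16067 — 2 statements merged into one kernel-verified Lean document; each statement's English description precedes it below -/
import Mathlib

section
/- Let g ∈ 𝔽_q[T] be monic and c ∈ 𝔽_q[T] with c ≠ 0 and deg c < deg g. Then Σ_{f ∈ M_n} e(cf/g) = 0 for every n > deg g − deg c − 1; consequently the series D_1(u;c/g) = Σ_{f ∈ M} e(cf/g)·u^{deg f} is a polynomial in u, and for every u ∈ ℂ with qu ≠ 1 it satisfies D_1(u;c/g) = (qu)^{deg g − deg c − 1}·( e_q(sgn(c)) − 1/(1 − qu) ) + 1/(1 − qu), where sgn(c) denotes the leading coefficient of c. -/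
/-!
A monic `f` of degree `n` is `T^n + v` with `v` running over the `𝔽_q`-space of polynomials of
degree `< n`, and `e(c f / g) = e_q(L (c T^n)) e_q(L (c v))` for the linear functional
`L a = [T^(deg g - 1)] (a mod g)`. For `n > deg g - deg c - 1` the functional `v ↦ L (c v)` is
nonzero, since it sends `T^(deg g - deg c - 1)` to `sgn c`; a nontrivial additive character summed
over a vector space vanishes. For smaller `n`, `c f` has degree `< deg g` and is its own residue,
so `e(c f / g)` is `e_q(sgn c)` when `deg (c f) = deg g - 1` and `1` otherwise; what remains is a
geometric series in `q u`.
-/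

open Polynomial
open scoped Classical

noncomputable section

/-- The canonical additive character of a finite field `F`:
`e_q(y) = exp(2πi·Tr(y)/p)` where `p` is the characteristic. -/
def eChar (F : Type) [Field F] [Fintype F] (y : F) : ℂ :=
  letI : Algebra (ZMod (ringChar F)) F := ZMod.algebra F (ringChar F)
  Complex.exp (2 * Real.pi * Complex.I *
    ((Algebra.trace (ZMod (ringChar F)) F y).val : ℂ) / (ringChar F : ℂ))

variable {F : Type} [Field F] [Fintype F]

/-- `e(a/g) = e_q(coefficient of T^(deg g - 1) of (a mod g))`. -/
def eFrac (a g : Polynomial F) : ℂ :=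
  eChar F ((a % g).coeff (g.natDegree - 1))

/-- Number of monic divisors of a polynomial. -/
def dCount (f : Polynomial F) : ℕ :=
  Set.ncard {g : Polynomial F | g.Monic ∧ g ∣ f}

/-- `r_χ(f) = Σ_{g monic, g ∣ f} χ(g)`. -/
def rChi (χ : Polynomial F → ℂ) (f : Polynomial F) : ℂ :=
  ∑ᶠ g ∈ {g : Polynomial F | g.Monic ∧ g ∣ f}, χ g

/-- A Dirichlet character modulo `ℓ`: a function induced by a group homomorphism
`(F[T]/(ℓ))^× → ℂ^×`, extended by zero on non-coprime arguments. -/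
def IsDirichletChar (ℓ : Polynomial F) (χ : Polynomial F → ℂ) : Prop :=
  (∀ f g : Polynomial F, f % ℓ = g % ℓ → χ f = χ g) ∧
  (∀ f g : Polynomial F, χ (f * g) = χ f * χ g) ∧ χ 1 = 1 ∧
  ∀ f : Polynomial F, χ f = 0 ↔ ¬ IsCoprime f ℓ

/-- Primitivity: `χ` is not induced by a character modulo a proper (monic) divisor of `ℓ`. -/
def IsPrimitiveChar (ℓ : Polynomial F) (χ : Polynomial F → ℂ) : Prop :=
  IsDirichletChar ℓ χ ∧
  ∀ ℓ' : Polynomial F, ℓ'.Monic → ℓ' ∣ ℓ → ℓ' ≠ ℓ →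
    ¬ ∃ χ' : Polynomial F → ℂ, IsDirichletChar ℓ' χ' ∧
      ∀ f : Polynomial F, IsCoprime f ℓ → χ f = χ' f

/-- Complex conjugate character. -/
def conjChar (χ : Polynomial F → ℂ) : Polynomial F → ℂ := fun f => starRingEnd ℂ (χ f)

/-- `L(s,χ) = Σ_{f monic} χ(f)|f|^{-s}`, summed by degree. -/
def LFun (χ : Polynomial F → ℂ) (s : ℂ) : ℂ :=
  ∑' n : ℕ, (∑ᶠ f ∈ {f : Polynomial F | f.Monic ∧ f.natDegree = n}, χ f) *
    (Fintype.card F : ℂ) ^ (-(s * (n : ℂ)))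

/-- Gauss sum `G(χ) = Σ_{deg a < deg ℓ} χ(a)·e(a/ℓ)`. -/
def GSum (ℓ : Polynomial F) (χ : Polynomial F → ℂ) : ℂ :=
  ∑ᶠ a ∈ {a : Polynomial F | a.degree < ℓ.degree}, χ a * eFrac a ℓ

/-- Kloosterman sum over `F`. -/
def Kl2 (α β : F) : ℂ :=
  ∑ γ : Fˣ, eChar F (α * (γ : F) + β * ((γ⁻¹ : Fˣ) : F))

/-- Twisted Kloosterman sum over `F`. -/
def KlChi (χ : Polynomial F → ℂ) (α β : F) : ℂ :=
  ∑ γ : Fˣ, χ (Polynomial.C (γ : F)) * eChar F (α * (γ : F) + β * ((γ⁻¹ : Fˣ) : F))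

/-- Gauss sum of the restriction of `χ` to `F`. -/
def tauChi (χ : Polynomial F → ℂ) (α : F) : ℂ :=
  ∑ γ : Fˣ, χ (Polynomial.C (γ : F)) * eChar F (α * (γ : F))

/-- Generalized binomial coefficient `C(-m, j)`. -/
def negBinom (m j : ℕ) : ℤ :=
  if m = 0 then (if j = 0 then 1 else 0) else (-1) ^ j * (Nat.choose (m + j - 1) j)

/-- The coefficients `b_k(χ; λ, η₁, η₂)` of the Voronoi summation formula. -/
def bCoeff (χ : Polynomial F → ℂ) (lam : F) (η₁ η₂ k : ℕ) : ℂ :=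
  (-1 : ℂ) ^ (k - η₁ - η₂) * KlChi χ ((η₁ : F) - 1) ((1 - (η₂ : F)) * lam) *
    (if η₁ + η₂ ≤ k then (negBinom (η₁ + η₂) (k - η₁ - η₂) : ℂ) else 0)

/-- The untwisted coefficients `b_k(λ, η₁, η₂)`. -/
def bCoeffD (lam : F) (η₁ η₂ k : ℕ) : ℂ :=
  (-1 : ℂ) ^ (k - η₁ - η₂) * Kl2 ((η₁ : F) - 1) ((1 - (η₂ : F)) * lam) *
    (if η₁ + η₂ ≤ k then (negBinom (η₁ + η₂) (k - η₁ - η₂) : ℂ) else 0)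

/-- The series `Σ_{f monic} c(f)·u^{deg f}` (as a `tsum`). -/
def monicSeries (c : Polynomial F → ℂ) (u : ℂ) : ℂ :=
  ∑' f : {f : Polynomial F // f.Monic}, c f * u ^ (f : Polynomial F).natDegree

/-- `φ` is the rational continuation of the series `u ↦ Σ_{f monic} c(f)·u^{deg f}`:
it agrees with the (convergent) series on `‖u‖ < 1/q` and is a rational function. -/
def IsRatCont (c : Polynomial F → ℂ) (φ : ℂ → ℂ) : Prop :=
  (∃ P Q : Polynomial ℂ, IsCoprime P Q ∧ Q ≠ 0 ∧
    ∀ z : ℂ, Q.eval z ≠ 0 → φ z = P.eval z / Q.eval z) ∧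
  ∀ u : ℂ, ‖u‖ < 1 / (Fintype.card F) →
    HasSum (fun f : {f : Polynomial F // f.Monic} => c f * u ^ (f : Polynomial F).natDegree)
      (φ u)

end

section AdditiveCharacter

variable (F : Type) [Field F] [Fintype F]

noncomputable def eCharAddChar : AddChar F ℂ :=
  letI : Algebra (ZMod (ringChar F)) F := ZMod.algebra F (ringChar F)
  haveI : NeZero (ringChar F) := ⟨(CharP.char_is_prime F (ringChar F)).ne_zero⟩
  ZMod.stdAddChar.compAddMonoidHom (Algebra.trace (ZMod (ringChar F)) F).toAddMonoidHom

@[simp]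
lemma eCharAddChar_apply (y : F) : eCharAddChar F y = eChar F y := by
  let : Algebra (ZMod (ringChar F)) F := ZMod.algebra F (ringChar F)
  have : NeZero (ringChar F) := ⟨(CharP.char_is_prime F (ringChar F)).ne_zero⟩
  simp [eCharAddChar, eChar, ZMod.stdAddChar_apply, ZMod.toCircle_apply]

lemma exists_eChar_ne_one : ∃ y : F, eChar F y ≠ 1 := by
  let : Algebra (ZMod (ringChar F)) F := ZMod.algebra F (ringChar F)
  have : NeZero (ringChar F) := ⟨(CharP.char_is_prime F (ringChar F)).ne_zero⟩
  obtain ⟨y, hy⟩ := FiniteField.trace_to_zmod_nondegenerate F (one_ne_zero (α := F))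
  refine ⟨y, fun h => hy ?_⟩
  rw [← eCharAddChar_apply] at h
  rw [one_mul]
  exact ZMod.injective_stdAddChar (h.trans (ZMod.stdAddChar.map_zero_eq_one).symm)

variable {F}

lemma sum_eChar_linearMap_eq_zero {V : Type*} [AddCommGroup V] [Module F V] [Fintype V]
    {L : V →ₗ[F] F} (hL : L ≠ 0) : ∑ v, eChar F (L v) = 0 := by
  have hψ : (eCharAddChar F).compAddMonoidHom L.toAddMonoidHom ≠ 1 := by
    obtain ⟨y, hy⟩ := exists_eChar_ne_one F
    obtain ⟨v, rfl⟩ := L.surjective_of_ne_zero hL y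
    exact AddChar.ne_one_iff.mpr ⟨v, by simpa using hy⟩
  simpa using AddChar.sum_eq_zero_of_ne_one hψ

end AdditiveCharacter

section MonicSums

variable {F : Type} [Field F] [Fintype F]

lemma finsum_monic_natDegree_eq_sum (n : ℕ) (φ : F[X] → ℂ) :
    ∑ᶠ f ∈ {f : F[X] | f.Monic ∧ f.natDegree = n}, φ f =
      ∑ v : Fin n → F, φ (X ^ n + ((degreeLTEquiv F n).symm v : F[X])) := by
  let e : (Fin n → F) ≃ {f : F[X] // f.Monic ∧ f.natDegree = n} :=
    (degreeLTEquiv F n).symm.toEquiv.trans (monicEquivDegreeLT n).symm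
  rw [← finsum_set_coe_eq_finsum_mem, ← finsum_eq_sum_of_fintype]
  exact (finsum_comp_equiv e (f := fun f : {f : F[X] // f.Monic ∧ f.natDegree = n} => φ f)).symm

lemma finsum_monic_natDegree_eq_card_pow_mul {n : ℕ} {φ : F[X] → ℂ} {a : ℂ}
    (hφ : ∀ f : F[X], f.Monic → f.natDegree = n → φ f = a) :
    ∑ᶠ f ∈ {f : F[X] | f.Monic ∧ f.natDegree = n}, φ f = (Fintype.card F : ℂ) ^ n * a := by
  have hv (v : Fin n → F) : φ (X ^ n + ((degreeLTEquiv F n).symm v : F[X])) = a :=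
    have hf := ((monicEquivDegreeLT n).symm ((degreeLTEquiv F n).symm v)).2
    hφ _ hf.1 hf.2
  rw [finsum_monic_natDegree_eq_sum]
  simp [hv]

end MonicSums

section EFrac

variable {F : Type} [Field F]

noncomputable def eFracLinearMap (c g : F[X]) : F[X] →ₗ[F] F :=
  lcoeff F (g.natDegree - 1) ∘ₗ modByMonicHom g ∘ₗ LinearMap.mulLeft F c

lemma eFracLinearMap_X_pow {c g : F[X]} (hg : g.Monic) (hc : c ≠ 0)
    (hcg : c.natDegree < g.natDegree) :
    eFracLinearMap c g (X ^ (g.natDegree - c.natDegree - 1)) = c.leadingCoeff := by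
  have hdeg : (c * X ^ (g.natDegree - c.natDegree - 1)).natDegree = g.natDegree - 1 := by
    rw [natDegree_mul_X_pow _ hc]
    omega
  change ((c * _) %ₘ g).coeff _ = _
  rw [(modByMonic_eq_self_iff hg).mpr (degree_lt_degree (by omega)), ← hdeg, coeff_natDegree,
    leadingCoeff_mul_X_pow]

variable [Fintype F]

lemma eFrac_of_degree_lt {a g : F[X]} (hg : g ≠ 0) (ha : a.degree < g.degree) :
    eFrac a g = eChar F (a.coeff (g.natDegree - 1)) := by
  rw [eFrac, (mod_eq_self_iff hg).mpr ha]

lemma finsum_eFrac_mul_monic_of_lt {c g : F[X]} (hg : g ≠ 0) {k : ℕ}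
    (hk : c.natDegree + k + 1 < g.natDegree) :
    ∑ᶠ f ∈ {f : F[X] | f.Monic ∧ f.natDegree = k}, eFrac (c * f) g =
      (Fintype.card F : ℂ) ^ k := by
  rw [← mul_one ((Fintype.card F : ℂ) ^ k)]
  refine finsum_monic_natDegree_eq_card_pow_mul fun f hf hfk => ?_
  have hcf : (c * f).natDegree < g.natDegree - 1 := natDegree_mul_le.trans_lt (by omega)
  rw [eFrac_of_degree_lt hg (degree_lt_degree (by omega)),
    coeff_eq_zero_of_natDegree_lt (by omega), ← eCharAddChar_apply, AddChar.map_zero_eq_one]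

lemma finsum_eFrac_mul_monic_of_eq {c g : F[X]} (hg : g ≠ 0) (hc : c ≠ 0) {k : ℕ}
    (hk : c.natDegree + k + 1 = g.natDegree) :
    ∑ᶠ f ∈ {f : F[X] | f.Monic ∧ f.natDegree = k}, eFrac (c * f) g =
      (Fintype.card F : ℂ) ^ k * eChar F c.leadingCoeff := by
  refine finsum_monic_natDegree_eq_card_pow_mul fun f hf hfk => ?_
  have hcf : (c * f).natDegree = g.natDegree - 1 := by
    rw [natDegree_mul hc hf.ne_zero, hfk]; omega
  rw [eFrac_of_degree_lt hg (degree_lt_degree (by omega)), ← hcf, coeff_natDegree,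
    leadingCoeff_mul_monic hf]

lemma eFrac_mul_eq_eChar_eFracLinearMap {g : F[X]} (hg : g.Monic) (c a : F[X]) :
    eFrac (c * a) g = eChar F (eFracLinearMap c g a) := by
  rw [eFrac, ← modByMonic_eq_mod _ hg]
  rfl

lemma finsum_eFrac_mul_monic_eq_zero {c g : F[X]} (hg : g.Monic) (hc : c ≠ 0)
    (hcg : c.natDegree < g.natDegree) {n : ℕ} (hn : g.natDegree - c.natDegree - 1 < n) :
    ∑ᶠ f ∈ {f : F[X] | f.Monic ∧ f.natDegree = n}, eFrac (c * f) g = 0 := by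
  let L : (Fin n → F) →ₗ[F] F :=
    eFracLinearMap c g ∘ₗ (degreeLT F n).subtype ∘ₗ (degreeLTEquiv F n).symm.toLinearMap
  have hL : L ≠ 0 := by
    have hX : X ^ (g.natDegree - c.natDegree - 1) ∈ degreeLT F n := by
      rw [mem_degreeLT, degree_X_pow]
      exact_mod_cast hn
    refine fun h0 => leadingCoeff_ne_zero.mpr hc ?_
    simpa [L, eFracLinearMap_X_pow hg hc hcg] using
      LinearMap.congr_fun h0 (degreeLTEquiv F n ⟨_, hX⟩)
  calc ∑ᶠ f ∈ {f : F[X] | f.Monic ∧ f.natDegree = n}, eFrac (c * f) g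
      = ∑ v, eChar F (eFracLinearMap c g (X ^ n)) * eChar F (L v) := by
        rw [finsum_monic_natDegree_eq_sum]
        simp [eFrac_mul_eq_eChar_eFracLinearMap hg, L, ← eCharAddChar_apply,
          AddChar.map_add_eq_mul]
    _ = 0 := by rw [← Finset.mul_sum, sum_eChar_linearMap_eq_zero hL, mul_zero]

end EFrac

/-- **Closed form for the degree-one Estermann function over `𝔽_q[T]`:**
the coefficient sums `Σ_{f ∈ M_n} e(cf/g)` vanish for `n > deg g - deg c - 1`, so the
series `D_1(u; c/g)` is a polynomial in `u`, and it equals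
`(qu)^{deg g - deg c - 1}(e_q(sgn c) - 1/(1-qu)) + 1/(1-qu)` whenever `qu ≠ 1`. -/
theorem estermannD1_closed_form
    (F : Type) [Field F] [Fintype F] (q : ℕ) (hq : q = Fintype.card F)
    (g : Polynomial F) (hg : g.Monic) (c : Polynomial F)
    (hc0 : c ≠ 0) (hcdeg : c.degree < g.degree) :
    (∀ n : ℕ, g.natDegree - c.natDegree - 1 < n →
      (∑ᶠ f ∈ {f : Polynomial F | f.Monic ∧ f.natDegree = n}, eFrac (c * f) g) = 0) ∧
    ∀ u : ℂ, (q : ℂ) * u ≠ 1 →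
      (∑ k ∈ Finset.range (g.natDegree - c.natDegree),
        (∑ᶠ f ∈ {f : Polynomial F | f.Monic ∧ f.natDegree = k}, eFrac (c * f) g) * u ^ k) =
      ((q : ℂ) * u) ^ (g.natDegree - c.natDegree - 1) *
        (eChar F c.leadingCoeff - 1 / (1 - (q : ℂ) * u)) + 1 / (1 - (q : ℂ) * u) := by
  subst hq
  have hcg : c.natDegree < g.natDegree := natDegree_lt_natDegree hc0 hcdeg
  refine ⟨fun n hn => finsum_eFrac_mul_monic_eq_zero hg hc0 hcg hn, fun u hu => ?_⟩
  set N := g.natDegree - c.natDegree - 1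
  have hlow : ∀ k ∈ Finset.range N,
      (∑ᶠ f ∈ {f : F[X] | f.Monic ∧ f.natDegree = k}, eFrac (c * f) g) * u ^ k =
        ((Fintype.card F : ℂ) * u) ^ k := fun k hk => by
    rw [finsum_eFrac_mul_monic_of_lt hg.ne_zero (by have := Finset.mem_range.mp hk; omega), mul_pow]
  rw [show g.natDegree - c.natDegree = N + 1 by omega, Finset.sum_range_succ,
    Finset.sum_congr rfl hlow, finsum_eFrac_mul_monic_of_eq hg.ne_zero hc0 (by omega),
    geom_sum_eq hu]
  field_simp
  ring
end

section
/- Let g ∈ 𝔽_q[T] be monic and c ∈ 𝔽_q[T]. Then for every u ∈ ℂ with |u| < 1/q, D_2(u;c/g) = Σ_a Z(u;a,g)·D_1(u;ac/g), where a runs over all polynomials in 𝔽_q[T] of degree < deg g. If moreover gcd(c,g) = 1, c̄ is any multiplicative inverse of c modulo g, and b ∈ 𝔽_q[T], then D_2(u;bc̄/g) = Σ_a Z(u;ac,g)·D_1(u;ab/g), with a running over the same set. -/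
open Polynomial
open scoped Classical

/-!
Since `d = 1 * 1` as a Dirichlet convolution over monic polynomials, `D₂(u; c/g)` is the double
series `Σ_{h,k monic} e(chk/g) u^{deg h + deg k}`, which converges absolutely for `|u| < 1/q`.
The phase `e(chk/g)` only depends on `h` through its residue `a = h mod g`, so splitting the
`h`-sum by residue factors the double series as `Σ_a Z(u;a,g) D₁(u;ac/g)`. For the second identity,
apply the first one to `bc̄` and reindex the residues by `a ↦ ac mod g`, a permutation of the
residues since `c` is invertible modulo `g`.
-/

theorem EuclideanDomain.dvd_sub_mod {R : Type*} [EuclideanDomain R] (a b : R) : b ∣ a - a % b :=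
  ⟨a / b, by rw [EuclideanDomain.mod_eq_sub_mul_div]; ring⟩

namespace Polynomial

section Field

variable {K : Type*} [Field K]

theorem mod_mod_self (p g : K[X]) : p % g % g = p % g :=
  mod_eq_of_dvd_sub <| by simpa using (EuclideanDomain.dvd_sub_mod p g).neg_right

theorem mul_mod_mul_mod_eq_self {a g x y : K[X]} (ha : a.degree < g.degree)
    (hxy : g ∣ x * y - 1) : a * x % g * y % g = a := by
  have hg : g ≠ 0 := by rintro rfl; simp at ha
  calc a * x % g * y % g = a % g := mod_eq_of_dvd_sub <| by
        have key : a * x % g * y - a = -((a * x - a * x % g) * y) + a * (x * y - 1) := by ring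
        rw [key]
        exact dvd_add ((EuclideanDomain.dvd_sub_mod _ _).mul_right y).neg_right (hxy.mul_left a)
    _ = a := (mod_eq_self_iff hg).2 ha

theorem bijOn_mul_mod {g c cbar : K[X]} (hg : g ≠ 0) (hc : g ∣ c * cbar - 1) :
    Set.BijOn (fun a => a * c % g) {a | a.degree < g.degree} {a | a.degree < g.degree} :=
  Set.InvOn.bijOn
    ⟨fun _ ha => mul_mod_mul_mod_eq_self ha hc,
      fun _ ha => mul_mod_mul_mod_eq_self ha (by rwa [mul_comm])⟩
    (fun _ _ => degree_mod_lt _ hg) (fun _ _ => degree_mod_lt _ hg)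

end Field

variable {R : Type*} [Semiring R]

theorem finite_setOf_degree_lt [Finite R] (g : R[X]) :
    {a : R[X] | a.degree < g.degree}.Finite := by
  have : Finite (degreeLT R (g.natDegree + 1)) :=
    Finite.of_equiv _ (degreeLTEquiv R _).toEquiv.symm
  refine (Set.toFinite (degreeLT R (g.natDegree + 1) : Set R[X])).subset fun a ha => ?_
  rw [SetLike.mem_coe, mem_degreeLT]
  exact ha.trans_le (degree_le_natDegree.trans (by exact_mod_cast Nat.le_succ _))

abbrev Monics (R : Type*) [Semiring R] := {f : R[X] // f.Monic}

theorem injective_natDegree_sigma_coeff :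
    Function.Injective fun f : Monics R =>
      (⟨f.1.natDegree, fun j : Fin f.1.natDegree => f.1.coeff j⟩ : Σ n : ℕ, Fin n → R) := by
  intro f g hfg
  obtain ⟨hdeg, hcoeff⟩ := Sigma.ext_iff.mp hfg
  dsimp only at hdeg hcoeff
  have hcoeff' := (Fin.heq_fun_iff hdeg).mp hcoeff
  refine Subtype.ext (Polynomial.ext fun j => ?_)
  rcases lt_trichotomy j f.1.natDegree with hj | rfl | hj
  · exact hcoeff' ⟨j, hj⟩
  · rw [f.2.coeff_natDegree, hdeg, g.2.coeff_natDegree]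
  · rw [coeff_eq_zero_of_natDegree_lt hj, coeff_eq_zero_of_natDegree_lt (hdeg ▸ hj)]

theorem summable_pow_natDegree_monic [Fintype R] {r : ℝ} (hr0 : 0 ≤ r)
    (hr : Fintype.card R * r < 1) : Summable fun f : Monics R => r ^ f.1.natDegree := by
  suffices h : Summable fun p : Σ n : ℕ, Fin n → R => r ^ p.1 from
    (h.comp_injective injective_natDegree_sigma_coeff :)
  refine (summable_sigma_of_nonneg fun _ => pow_nonneg hr0 _).2 ⟨fun _ => .of_finite, ?_⟩
  convert summable_geometric_of_lt_one (by positivity) hr using 2 with n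
  simp [mul_pow]

theorem summable_norm_mul_pow_natDegree_monic [Fintype R] {c : Monics R → ℂ}
    (hc : ∀ f, ‖c f‖ ≤ 1) {u : ℂ} (hu : Fintype.card R * ‖u‖ < 1) :
    Summable fun f : Monics R => ‖c f * u ^ f.1.natDegree‖ := by
  refine (summable_pow_natDegree_monic (norm_nonneg u) hu).of_nonneg_of_le
    (fun _ => norm_nonneg _) fun f => ?_
  rw [norm_mul, norm_pow]
  exact mul_le_of_le_one_left (by positivity) (hc f)

noncomputable def monicMul (p : Monics R × Monics R) : Monics R :=
  ⟨p.1.1 * p.2.1, p.1.2.mul p.2.2⟩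

end Polynomial

section Summation

variable {ι ι' κ R : Type*} [NormedRing R] [CompleteSpace R]

theorem tsum_prod_mul_eq_sum_fibers [DecidableEq κ] (s : Finset κ) (r : ι → κ)
    (hr : ∀ i, r i ∈ s) {α : ι → R} {β : κ → ι' → R} (hα : Summable fun i => ‖α i‖)
    (hβ : ∀ a ∈ s, Summable fun j => ‖β a j‖) :
    ∑' p : ι × ι', α p.1 * β (r p.1) p.2 =
      ∑ a ∈ s, (∑' i, if r i = a then α i else 0) * ∑' j, β a j := by
  have hα' (a : κ) : Summable fun i => ‖if r i = a then α i else 0‖ := by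
    refine hα.of_nonneg_of_le (fun _ => norm_nonneg _) fun i => ?_
    split_ifs <;> simp
  calc ∑' p : ι × ι', α p.1 * β (r p.1) p.2
      = ∑' p : ι × ι', ∑ a ∈ s, (if r p.1 = a then α p.1 else 0) * β a p.2 := by
        refine tsum_congr fun p => ?_
        simp only [ite_mul, zero_mul, Finset.sum_ite_eq, hr, if_true]
    _ = ∑ a ∈ s, ∑' p : ι × ι', (if r p.1 = a then α p.1 else 0) * β a p.2 :=
        Summable.tsum_finsetSum fun a ha =>
          summable_mul_of_summable_norm (f := fun i => if r i = a then α i else 0) (hα' a) (hβ a ha)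
    _ = ∑ a ∈ s, (∑' i, if r i = a then α i else 0) * ∑' j, β a j :=
        Finset.sum_congr rfl fun a ha => (tsum_mul_tsum_of_summable_norm (hα' a) (hβ a ha)).symm

end Summation

section FiniteField

variable {F : Type} [Field F]

theorem norm_eChar [Fintype F] (y : F) : ‖eChar F y‖ = 1 := by
  rw [eChar, Complex.norm_exp]
  convert Real.exp_zero using 2
  simp [Complex.div_re]

theorem norm_eFrac [Fintype F] (a g : F[X]) : ‖eFrac a g‖ = 1 := norm_eChar _

theorem eFrac_congr [Fintype F] {a b g : F[X]} (h : a % g = b % g) : eFrac a g = eFrac b g := by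
  rw [eFrac, eFrac, h]

theorem eFrac_mul_mul_eq_mod_mul [Fintype F] (c h k g : F[X]) :
    eFrac (c * (h * k)) g = eFrac (h % g * c * k) g := by
  refine eFrac_congr (mod_eq_of_dvd_sub ?_)
  have key : c * (h * k) - h % g * c * k = c * k * (h - h % g) := by ring
  rw [key]
  exact (EuclideanDomain.dvd_sub_mod h g).mul_left _

noncomputable def monicMulFiberEquiv (f : Monics F) :
    monicMul ⁻¹' {f} ≃ {d : F[X] | d.Monic ∧ d ∣ f.1} where
  toFun p := ⟨p.1.1.1, p.1.1.2, p.1.2.1, (congrArg Subtype.val p.2).symm⟩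
  invFun d :=
    have hd : d.1 * (f.1 / d.1) = f.1 := EuclideanDomain.mul_div_cancel' d.2.1.ne_zero d.2.2
    ⟨(⟨d.1, d.2.1⟩, ⟨f.1 / d.1, d.2.1.of_mul_monic_left (by rw [hd]; exact f.2)⟩), Subtype.ext hd⟩
  left_inv p := by
    obtain ⟨⟨h, k⟩, hp⟩ := p
    have hhk : h.1 * k.1 = f.1 := congrArg Subtype.val hp
    refine Subtype.ext (Prod.ext rfl (Subtype.ext ?_))
    simp only [← hhk, mul_div_cancel_left₀ _ h.2.ne_zero]
  right_inv _ := rfl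

theorem tsum_dCount_mul {w : F[X] → ℂ}
    (hw : Summable fun p : Monics F × Monics F => w (p.1.1 * p.2.1)) :
    ∑' f : Monics F, (dCount f.1 : ℂ) * w f.1 = ∑' p : Monics F × Monics F, w (p.1.1 * p.2.1) := by
  rw [← (hw.hasSum.tsum_fiberwise monicMul).tsum_eq]
  refine tsum_congr fun f => ?_
  have hfiber (p : monicMul ⁻¹' {f}) : w (p.1.1.1 * p.1.2.1) = w f.1 :=
    congrArg (w ∘ Subtype.val) p.2
  rw [tsum_congr hfiber, tsum_const, Nat.card_congr (monicMulFiberEquiv f), Nat.card_coe_set_eq,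
    nsmul_eq_mul]
  rfl

end FiniteField

section Estermann

variable {F : Type} [Field F] [Fintype F] {g : F[X]} {u : ℂ}

theorem monicSeries_dCount_mul_eFrac (hg : g.Monic) (c : F[X])
    (hu : Fintype.card F * ‖u‖ < 1) :
    monicSeries (fun f => (dCount f : ℂ) * eFrac (c * f) g) u =
      ∑ᶠ a ∈ {a : F[X] | a.degree < g.degree},
        monicSeries (fun f => if f % g = a % g then (1 : ℂ) else 0) u *
          monicSeries (fun f => eFrac (a * c * f) g) u := by
  have hS := finite_setOf_degree_lt g
  have hpow : Summable fun f : Monics F => ‖u ^ f.1.natDegree‖ := by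
    simpa only [norm_pow] using summable_pow_natDegree_monic (norm_nonneg u) hu
  have hpairs : Summable fun p : Monics F × Monics F =>
      eFrac (c * (p.1.1 * p.2.1)) g * u ^ (p.1.1 * p.2.1).natDegree := by
    refine .of_norm_bounded (hpow.mul_of_nonneg hpow (fun _ => norm_nonneg _)
      fun _ => norm_nonneg _) fun p => le_of_eq ?_
    rw [norm_mul, norm_eFrac, one_mul, natDegree_mul p.1.2.ne_zero p.2.2.ne_zero, pow_add,
      norm_mul]
  have hphase (h k : Monics F) :
      eFrac (c * (h.1 * k.1)) g * u ^ (h.1 * k.1).natDegree =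
        u ^ h.1.natDegree * (eFrac (h.1 % g * c * k.1) g * u ^ k.1.natDegree) := by
    rw [eFrac_mul_mul_eq_mod_mul, natDegree_mul h.2.ne_zero k.2.ne_zero, pow_add]
    ring
  calc monicSeries (fun f => (dCount f : ℂ) * eFrac (c * f) g) u
      = ∑' f : Monics F, (dCount f.1 : ℂ) * (eFrac (c * f.1) g * u ^ f.1.natDegree) :=
        tsum_congr fun _ => mul_assoc _ _ _
    _ = ∑' p : Monics F × Monics F,
          eFrac (c * (p.1.1 * p.2.1)) g * u ^ (p.1.1 * p.2.1).natDegree :=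
        tsum_dCount_mul (w := fun f => eFrac (c * f) g * u ^ f.natDegree) hpairs
    _ = ∑' p : Monics F × Monics F,
          u ^ p.1.1.natDegree * (eFrac (p.1.1 % g * c * p.2.1) g * u ^ p.2.1.natDegree) :=
        tsum_congr fun p => hphase p.1 p.2
    _ = ∑ a ∈ hS.toFinset, (∑' h : Monics F, if h.1 % g = a then u ^ h.1.natDegree else 0) *
          ∑' k : Monics F, eFrac (a * c * k.1) g * u ^ k.1.natDegree :=
        tsum_prod_mul_eq_sum_fibers (α := fun h : Monics F => u ^ h.1.natDegree)
          (β := fun a (k : Monics F) => eFrac (a * c * k.1) g * u ^ k.1.natDegree) hS.toFinset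
          (fun h => h.1 % g) (fun h => hS.mem_toFinset.2 (degree_mod_lt _ hg.ne_zero)) hpow
          fun _ _ => summable_norm_mul_pow_natDegree_monic (fun _ => (norm_eFrac _ _).le) hu
    _ = _ := by
        rw [finsum_mem_eq_finite_toFinset_sum _ hS]
        refine Finset.sum_congr rfl fun a ha => ?_
        rw [(mod_eq_self_iff hg.ne_zero).2 (hS.mem_toFinset.1 ha)]
        simp only [monicSeries, ite_mul, one_mul, zero_mul]

theorem monicSeries_dCount_mul_eFrac_of_dvd_mul_sub_one (hg : g.Monic) {c cbar : F[X]}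
    (hc : g ∣ c * cbar - 1) (b : F[X]) (hu : Fintype.card F * ‖u‖ < 1) :
    monicSeries (fun f => (dCount f : ℂ) * eFrac (b * cbar * f) g) u =
      ∑ᶠ a ∈ {a : F[X] | a.degree < g.degree},
        monicSeries (fun f => if f % g = a * c % g then (1 : ℂ) else 0) u *
          monicSeries (fun f => eFrac (a * b * f) g) u := by
  rw [monicSeries_dCount_mul_eFrac hg (b * cbar) hu]
  refine (finsum_mem_eq_of_bijOn _ (bijOn_mul_mod hg.ne_zero hc) fun a _ => ?_).symm
  have hphase (f : F[X]) : eFrac (a * b * f) g = eFrac (a * c % g * (b * cbar) * f) g := by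
    refine eFrac_congr (mod_eq_of_dvd_sub ?_)
    have key : a * b * f - a * c % g * (b * cbar) * f =
        (a * c - a * c % g) * (b * cbar * f) - (c * cbar - 1) * (a * b * f) := by ring
    rw [key]
    exact dvd_sub ((EuclideanDomain.dvd_sub_mod _ _).mul_right _) (hc.mul_right _)
  simp only [mod_mod_self, hphase]

end Estermann

/-- **`D_2` as a bilinear combination of `Z` and `D_1`:** for `|u| < 1/q`,
`D_2(u;c/g) = Σ_{deg a < deg g} Z(u;a,g)·D_1(u;ac/g)`, and, when `gcd(c,g) = 1` with
`c̄` an inverse of `c` mod `g`, `D_2(u;bc̄/g) = Σ_{deg a < deg g} Z(u;ac,g)·D_1(u;ab/g)`. -/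
theorem estermannD2_bilinear
    (F : Type) [Field F] [Fintype F] (q : ℕ) (hq : q = Fintype.card F)
    (g : Polynomial F) (hg : g.Monic) (c : Polynomial F)
    (u : ℂ) (hu : ‖u‖ < 1 / q) :
    (monicSeries (fun f => (dCount f : ℂ) * eFrac (c * f) g) u =
      ∑ᶠ a ∈ {a : Polynomial F | a.degree < g.degree},
        monicSeries (fun f => if f % g = a % g then (1 : ℂ) else 0) u *
          monicSeries (fun f => eFrac (a * c * f) g) u) ∧
    (IsCoprime c g → ∀ cbar : Polynomial F, g ∣ c * cbar - 1 → ∀ b : Polynomial F,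
      monicSeries (fun f => (dCount f : ℂ) * eFrac (b * cbar * f) g) u =
        ∑ᶠ a ∈ {a : Polynomial F | a.degree < g.degree},
          monicSeries (fun f => if f % g = (a * c) % g then (1 : ℂ) else 0) u *
            monicSeries (fun f => eFrac (a * b * f) g) u) := by
  have hu' : Fintype.card F * ‖u‖ < 1 := by
    subst hq
    have hq0 : (0 : ℝ) < Fintype.card F := by exact_mod_cast Fintype.card_pos
    rwa [lt_div_iff₀ hq0, mul_comm] at hu
  exact ⟨monicSeries_dCount_mul_eFrac hg c hu',
    fun _ cbar hcbar b => monicSeries_dCount_mul_eFrac_of_dvd_mul_sub_one hg hcbar b hu'⟩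
end
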